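/- Let T be a nonempty well-founded tree on ℕ, and define by well-founded recursion on the nodes of T the combinatorial pregame G(s) for s ∈ T, in which Left's options from G(s) are exactly the games G(t) for t a child of s in T, and Right has no options. Then G([]), the game at the root of T, is equivalent as a combinatorial game (in the sense of Conway game equivalence of pregames) to the ordinal game associated to rank(T), i.e. to the pregame of the ordinal rank(T) in which Left may move to any strictly smaller ordinal and Right has no moves. In particular, the game value of the climbing-through-T game, in which black climbs through T while white passes, equals the rank of T as a well-founded tree. -/

import Mathlib

universe u

/-- A tree on `ℕ` is a set of finite sequences of natural numbers
closed under taking prefixes. -/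
def IsTree (T : Set (List ℕ)) : Prop :=
  ∀ s ∈ T, ∀ t : List ℕ, t <+: s → t ∈ T

/-- `ChildOf T t s` means `t` is a child of `s` in `T`, i.e. `t ∈ T` and
`t = s ++ [n]` for some `n : ℕ`. -/
def ChildOf (T : Set (List ℕ)) (t s : List ℕ) : Prop :=
  t ∈ T ∧ ∃ n : ℕ, t = s ++ [n]

/-- Given that the tree `T` is well-founded (the "is a child of" relation admits no
infinite ascending chain), the rank of a node `s` is defined by well-founded recursion:
`rank s = sup { rank t + 1 : t a child of s in T }`.  (This is exactly what `Acc.rank`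
computes for the accessibility witness of `s`.) -/
noncomputable def treeRank {T : Set (List ℕ)} (hwf : WellFounded (ChildOf T))
    (s : List ℕ) : Ordinal :=
  (hwf.apply s).rank

namespace SetTheory

/-- Conway pregames (removed from Mathlib; restored here with the old Mathlib definition). -/
inductive PGame : Type (u + 1)
  | mk : ∀ α β : Type u, (α → PGame) → (β → PGame) → PGame

namespace PGame

/-- `IsOption y x`: `y` is a (left or right) option of `x`. -/
inductive IsOption : PGame.{u} → PGame.{u} → Prop
  | moveLeft {l r : Type u} {L : l → PGame} {R : r → PGame} (i : l) : IsOption (L i) (mk l r L R)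
  | moveRight {l r : Type u} {L : l → PGame} {R : r → PGame} (j : r) : IsOption (R j) (mk l r L R)

theorem wf_isOption : WellFounded IsOption.{u} :=
  ⟨fun x => by
    induction x with
    | mk l r L R ihL ihR =>
      exact Acc.intro _ (fun y h => by cases h <;> first | exact ihL _ | exact ihR _)⟩

instance : WellFoundedRelation PGame.{u} := ⟨IsOption, wf_isOption⟩

/-- The old Mathlib simultaneous definition of `≤` and `⧏` on pregames. -/
def leLF : PGame.{u} → PGame.{u} → Prop × Prop
  | mk xl xr xL xR, mk yl yr yL yR =>
    ((∀ i, (leLF (xL i) (mk yl yr yL yR)).2) ∧ ∀ j, (leLF (mk xl xr xL xR) (yR j)).2,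
      (∃ i, (leLF (mk xl xr xL xR) (yL i)).1) ∨ ∃ j, (leLF (xR j) (mk yl yr yL yR)).1)
termination_by x y => (x, y)
decreasing_by
  all_goals first
    | exact Prod.Lex.left _ _ (IsOption.moveLeft _)
    | exact Prod.Lex.left _ _ (IsOption.moveRight _)
    | exact Prod.Lex.right _ (IsOption.moveLeft _)
    | exact Prod.Lex.right _ (IsOption.moveRight _)

instance : LE PGame.{u} := ⟨fun x y => (leLF x y).1⟩

/-- Equivalence of pregames: `x ≤ y ∧ y ≤ x`. -/
def Equiv (x y : PGame.{u}) : Prop := x ≤ y ∧ y ≤ x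

instance : HasEquiv PGame.{u} := ⟨Equiv⟩

end PGame

end SetTheory

/-- The pregame of an ordinal (old `Ordinal.toPGame`): Left may move to any smaller ordinal,
Right has no moves. -/
noncomputable def Ordinal.toPGame (o : Ordinal.{u}) : SetTheory.PGame.{u} :=
  ⟨o.ToType, PEmpty, fun x => (Ordinal.typein (α := o.ToType) (· < ·) x).toPGame, PEmpty.elim⟩
termination_by o
decreasing_by exact Ordinal.typein_lt_self x

open SetTheory in
/-- The combinatorial pregame `G s` associated by well-founded recursion to a node `s`
of the well-founded tree `T`: Left's options from `G s` are exactly the games `G t`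
for `t` a child of `s` in `T`, and Right has no options. -/
noncomputable def treeGame {T : Set (List ℕ)} (hwf : WellFounded (ChildOf T)) :
    List ℕ → PGame.{0} :=
  hwf.fix fun s IH =>
    PGame.mk {t : List ℕ // ChildOf T t s} PEmpty
      (fun t => IH t.1 t.2) PEmpty.elim

/-!
In both games Right has no moves. Against such a `y`, `x ≤ y` holds as soon
as every Left option of `x` lies below some Left option of `y`. So, by well-founded induction,
`G s ≤ rank s` because every child `t` of `s` has `rank t < rank s`, and `β ≤ G s` for every
`β ≤ rank s` because every `β' < rank s` satisfies `β' ≤ rank t` for some child `t` of `s`.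
-/

namespace SetTheory.PGame

def LF (x y : PGame.{u}) : Prop := (leLF x y).2

infix:50 " ⧏ " => LF

theorem mk_le_mk {xl xr yl yr : Type u} {xL : xl → PGame.{u}} {xR : xr → PGame.{u}}
    {yL : yl → PGame.{u}} {yR : yr → PGame.{u}} :
    mk xl xr xL xR ≤ mk yl yr yL yR ↔
      (∀ i, xL i ⧏ mk yl yr yL yR) ∧ ∀ j, mk xl xr xL xR ⧏ yR j := by
  change (leLF _ _).1 ↔ _
  rw [leLF]
  rfl

theorem lf_mk_of_le {x : PGame.{u}} {yl yr : Type u} {yL : yl → PGame.{u}}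
    {yR : yr → PGame.{u}} {i : yl} (h : x ≤ yL i) : x ⧏ mk yl yr yL yR := by
  cases x
  rw [LF, leLF]
  exact Or.inl ⟨i, h⟩

theorem mk_le_mk_of_forall_exists_le {xl xr yl yr : Type u} [IsEmpty yr]
    {xL : xl → PGame.{u}} {xR : xr → PGame.{u}} {yL : yl → PGame.{u}} {yR : yr → PGame.{u}}
    (h : ∀ i, ∃ j, xL i ≤ yL j) : mk xl xr xL xR ≤ mk yl yr yL yR :=
  mk_le_mk.2 ⟨fun i => (h i).elim fun _ hj => lf_mk_of_le hj, isEmptyElim⟩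

end SetTheory.PGame

namespace Ordinal

open SetTheory PGame

theorem toPGame_def (o : Ordinal.{u}) :
    o.toPGame =
      mk o.ToType PEmpty (fun x => (typein (α := o.ToType) (· < ·) x).toPGame) PEmpty.elim := by
  rw [toPGame]

theorem mk_le_toPGame {xl xr : Type u} {xL : xl → PGame.{u}} {xR : xr → PGame.{u}}
    {o : Ordinal.{u}} (h : ∀ i, ∃ o' < o, xL i ≤ o'.toPGame) : mk xl xr xL xR ≤ o.toPGame := by
  rw [toPGame_def]
  refine mk_le_mk_of_forall_exists_le fun i => ?_
  obtain ⟨o', ho', hi⟩ := h i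
  obtain ⟨x, rfl⟩ := typein_surj (α := o.ToType) (· < ·) (o := o') (by rwa [type_toType])
  exact ⟨x, hi⟩

theorem toPGame_le_mk {yl yr : Type u} [IsEmpty yr] {yL : yl → PGame.{u}}
    {yR : yr → PGame.{u}} {o : Ordinal.{u}} (h : ∀ o' < o, ∃ j, o'.toPGame ≤ yL j) :
    o.toPGame ≤ mk yl yr yL yR := by
  rw [toPGame_def]
  exact mk_le_mk_of_forall_exists_le fun x => h _ (typein_lt_self x)

end Ordinal

theorem Acc.exists_rel_le_rank_of_lt_rank {α : Type u} {r : α → α → Prop} {a : α}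
    (h : Acc r a) {o : Ordinal.{u}} (ho : o < h.rank) : ∃ b, ∃ hb : r b a, o ≤ (h.inv hb).rank := by
  rw [h.rank_eq, Ordinal.lt_iSup_iff] at ho
  obtain ⟨⟨b, hb⟩, ho⟩ := ho
  exact ⟨b, hb, Order.lt_succ_iff.1 ho⟩

namespace SetTheory.PGame

section LeftOnlyRecursion

variable {α : Type u} {r : α → α → Prop} (hwf : WellFounded r) {G : α → PGame.{u}}
  (hG : ∀ a, G a = mk {b // r b a} PEmpty (fun b => G b.1) PEmpty.elim)
include hG

theorem le_toPGame_rank (a : α) : G a ≤ (hwf.apply a).rank.toPGame := by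
  induction a using hwf.induction with
  | _ a IH =>
    rw [hG a]
    exact Ordinal.mk_le_toPGame fun b =>
      ⟨_, (hwf.apply a).rank_lt_of_rel b.2, IH b.1 b.2⟩

theorem toPGame_le_of_le_rank (a : α) {o : Ordinal.{u}} (ho : o ≤ (hwf.apply a).rank) :
    o.toPGame ≤ G a := by
  induction a using hwf.induction generalizing o with
  | _ a IH =>
    rw [hG a]
    refine Ordinal.toPGame_le_mk fun o' ho' => ?_
    obtain ⟨b, hb, hle⟩ := (hwf.apply a).exists_rel_le_rank_of_lt_rank (ho'.trans_le ho)
    exact ⟨⟨b, hb⟩, IH b hb hle⟩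

theorem equiv_toPGame_rank (a : α) : G a ≈ (hwf.apply a).rank.toPGame :=
  ⟨le_toPGame_rank hwf hG a, toPGame_le_of_le_rank hwf hG a le_rfl⟩

end LeftOnlyRecursion

end SetTheory.PGame

open SetTheory in
theorem treeGame_eq {T : Set (List ℕ)} (hwf : WellFounded (ChildOf T)) (s : List ℕ) :
    treeGame hwf s =
      PGame.mk {t : List ℕ // ChildOf T t s} PEmpty (fun t => treeGame hwf t.1) PEmpty.elim :=
  hwf.fix_eq _ s

open SetTheory in
theorem treeGame_equiv_toPGame_rank_general (T : Set (List ℕ)) (hwf : WellFounded (ChildOf T)) :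
    treeGame hwf [] ≈ (treeRank hwf ([] : List ℕ)).toPGame :=
  PGame.equiv_toPGame_rank hwf (treeGame_eq hwf) []

open SetTheory in
/-- For a nonempty well-founded tree `T` on `ℕ`, the game at the root of `T` is
equivalent, as a combinatorial game, to the ordinal game of `rank T`, i.e. to
`(rank T).toPGame`, in which Left may move to any strictly smaller ordinal and Right
has no moves.  In particular, the game value of the climbing-through-`T` game,
in which black climbs through `T` while white passes, equals the rank of `T`. -/
theorem treeGame_equiv_toPGame_rank (T : Set (List ℕ)) (hT : IsTree T)
    (hne : ([] : List ℕ) ∈ T) (hwf : WellFounded (ChildOf T)) :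
    treeGame hwf [] ≈ (treeRank hwf ([] : List ℕ)).toPGame :=
  treeGame_equiv_toPGame_rank_general T hwf
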